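/- arXiv:2602.01636 — 3 statements merged into one kernel-verified Lean document; each statement's English description precedes it below -/
import Mathlib

section
/- Let V and W be real Banach spaces, let U ⊆ V be open, let ũ ∈ U and ρ > 0 be such that the closed ball B_ρ := {w ∈ V : ‖w − ũ‖ ≤ ρ} is contained in U. Let F : V → W be Fréchet differentiable on U. Assume: (i) ‖F(ũ)‖ ≤ r for some r ≥ 0; (ii) DF(ũ) is a continuous linear isomorphism from V onto W whose inverse satisfies ‖DF(ũ)⁻¹‖ ≤ 1/α for some α > 0; (iii) there is L > 0 with ‖DF(w) − DF(z)‖ ≤ L‖w − z‖ for all w, z ∈ B_ρ. Set η := r/α, p := η + (L/(2α))ρ² − ρ and q := (L/α)ρ. If p ≤ 0 and q < 1, then there exists a unique u ∈ B_ρ with F(u) = 0; moreover the Newton map N(w) := w − DF(ũ)⁻¹(F(w)) maps B_ρ into B_ρ and satisfies ‖N(w) − N(z)‖ ≤ q‖w − z‖ for all w, z ∈ B_ρ. -/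
/-!
The simplified Newton map `N w = w - DF(ũ)⁻¹ F w` has the zeros of `F` as its fixed points, and
`N w - N z = -DF(ũ)⁻¹ (F w - F z - DF(ũ) (w - z))`. On `B_ρ` we have `‖DF x - DF ũ‖ ≤ Lρ`, so the
mean value inequality makes `N` a `q`-contraction there. Integrating the Lipschitz bound along
segments from `ũ` gives `‖F w - F ũ - DF(ũ) (w - ũ)‖ ≤ (L/2) ‖w - ũ‖²`, hence
`‖N w - ũ‖ ≤ η + (L/(2α)) ρ² ≤ ρ` because `p ≤ 0`. Banach's fixed-point theorem on the closed ball
concludes.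
-/

open Metric Set

section Taylor

variable {E F : Type*} [NormedAddCommGroup E] [NormedSpace ℝ E]
  [NormedAddCommGroup F] [NormedSpace ℝ F]
  {f : E → F} {f' : E → E →L[ℝ] F} {φ : E →L[ℝ] F} {s : Set E} {a w : E} {L : ℝ}

theorem Convex.norm_image_sub_sub_le_of_norm_hasFDerivAt_sub_le (hs : Convex ℝ s)
    (hf : ∀ x ∈ s, HasFDerivAt f (f' x) x) (hlip : ∀ x ∈ s, ‖f' x - φ‖ ≤ L * ‖x - a‖)
    (ha : a ∈ s) (hw : w ∈ s) :
    ‖f w - f a - φ (w - a)‖ ≤ L / 2 * ‖w - a‖ ^ 2 := by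
  set v := w - a
  have hseg : ∀ t ∈ Icc (0 : ℝ) 1, a + t • v ∈ s := fun t ht => hs.add_smul_sub_mem ha hw ht
  set g : ℝ → F := fun t => f (a + t • v) - f a - t • φ v
  have hg : ∀ t ∈ Icc (0 : ℝ) 1, HasDerivAt g (f' (a + t • v) v - φ v) t := by
    intro t ht
    have hline : HasDerivAt (fun t : ℝ => a + t • v) v t := by
      simpa using ((hasDerivAt_id t).smul_const v).const_add a
    have hlin : HasDerivAt (fun t : ℝ => t • φ v) (φ v) t := by
      simpa using (hasDerivAt_id t).smul_const (φ v)
    exact (((hf _ (hseg t ht)).comp_hasDerivAt t hline).sub_const (f a)).sub hlin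
  have hg' : ∀ t ∈ Ico (0 : ℝ) 1, ‖f' (a + t • v) v - φ v‖ ≤ L * ‖v‖ ^ 2 * t := by
    intro t ht
    calc ‖f' (a + t • v) v - φ v‖ ≤ ‖f' (a + t • v) - φ‖ * ‖v‖ := (f' (a + t • v) - φ).le_opNorm v
      _ ≤ L * ‖t • v‖ * ‖v‖ := by
        gcongr; simpa using hlip _ (hseg t (Ico_subset_Icc_self ht))
      _ = L * ‖v‖ ^ 2 * t := by rw [norm_smul, Real.norm_of_nonneg ht.1]; ring
  have hB : ∀ t, HasDerivAt (fun t : ℝ => L * ‖v‖ ^ 2 / 2 * t ^ 2) (L * ‖v‖ ^ 2 * t) t :=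
    fun t => ((hasDerivAt_pow 2 t).const_mul (L * ‖v‖ ^ 2 / 2)).congr_deriv (by norm_num; ring)
  have hboundary := image_norm_le_of_norm_deriv_right_le_deriv_boundary
    (fun t ht => (hg t ht).continuousAt.continuousWithinAt)
    (fun t ht => (hg t (Ico_subset_Icc_self ht)).hasDerivWithinAt) (by simp [g]) hB hg'
    (right_mem_Icc.2 zero_le_one)
  calc ‖f w - f a - φ v‖ = ‖g 1‖ := by simp [g, v]
    _ ≤ L * ‖v‖ ^ 2 / 2 * 1 ^ 2 := hboundary
    _ = L / 2 * ‖v‖ ^ 2 := by ring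

end Taylor

section Newton

variable {E F : Type*} [NormedAddCommGroup E] [NormedSpace ℝ E]
  [NormedAddCommGroup F] [NormedSpace ℝ F] (e : E ≃L[ℝ] F) (f : E → F)

def newtonMap (w : E) : E := w - e.symm (f w)

theorem newtonMap_eq_self_iff {w : E} : newtonMap e f w = w ↔ f w = 0 := by
  simp [newtonMap]

theorem newtonMap_sub_newtonMap (w z : E) :
    newtonMap e f w - newtonMap e f z = -e.symm (f w - f z - e (w - z)) := by
  simp only [newtonMap, map_sub, e.symm_apply_apply]; abel

variable {f} {f' : E → E →L[ℝ] F} {s : Set E}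

theorem norm_newtonMap_sub_newtonMap_le {C : ℝ} (hs : Convex ℝ s)
    (hf : ∀ x ∈ s, HasFDerivAt f (f' x) x) (hbound : ∀ x ∈ s, ‖f' x - e‖ ≤ C)
    {w z : E} (hw : w ∈ s) (hz : z ∈ s) :
    ‖newtonMap e f w - newtonMap e f z‖ ≤ ‖(e.symm : F →L[ℝ] E)‖ * C * ‖w - z‖ := by
  rw [newtonMap_sub_newtonMap, norm_neg, mul_assoc]
  calc ‖e.symm (f w - f z - e (w - z))‖
      ≤ ‖(e.symm : F →L[ℝ] E)‖ * ‖f w - f z - e (w - z)‖ := (e.symm : F →L[ℝ] E).le_opNorm _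
    _ ≤ ‖(e.symm : F →L[ℝ] E)‖ * (C * ‖w - z‖) := by
      gcongr
      exact hs.norm_image_sub_le_of_norm_hasFDerivWithin_le'
        (fun x hx => (hf x hx).hasFDerivWithinAt) hbound hz hw

theorem norm_newtonMap_sub_le {a w : E} {L : ℝ} (hs : Convex ℝ s)
    (hf : ∀ x ∈ s, HasFDerivAt f (f' x) x) (hlip : ∀ x ∈ s, ‖f' x - e‖ ≤ L * ‖x - a‖)
    (ha : a ∈ s) (hw : w ∈ s) :
    ‖newtonMap e f w - a‖ ≤ ‖(e.symm : F →L[ℝ] E)‖ * (L / 2 * ‖w - a‖ ^ 2 + ‖f a‖) := by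
  have hsplit : newtonMap e f w - a = -e.symm (f w - f a - e (w - a) + f a) := by
    simp only [newtonMap, map_add, map_sub, e.symm_apply_apply]; abel
  rw [hsplit, norm_neg]
  calc ‖e.symm (f w - f a - e (w - a) + f a)‖
      ≤ ‖(e.symm : F →L[ℝ] E)‖ * ‖f w - f a - e (w - a) + f a‖ := (e.symm : F →L[ℝ] E).le_opNorm _
    _ ≤ ‖(e.symm : F →L[ℝ] E)‖ * (L / 2 * ‖w - a‖ ^ 2 + ‖f a‖) := by
      gcongr
      exact (norm_add_le _ _).trans <| add_le_add_left
        (hs.norm_image_sub_sub_le_of_norm_hasFDerivAt_sub_le hf hlip ha hw) _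

end Newton

theorem exists_unique_isFixedPt_of_lipschitzOnWith {X : Type*} [MetricSpace X] {g : X → X}
    {s : Set X} {K : NNReal} (hsc : IsComplete s) (hne : s.Nonempty) (hmaps : MapsTo g s s)
    (hg : LipschitzOnWith K g s) (hK : K < 1) :
    ∃! x, x ∈ s ∧ Function.IsFixedPt g x := by
  have hcontr : ContractingWith K (hmaps.restrict g s s) := ⟨hK, hg.mapsToRestrict hmaps⟩
  obtain ⟨x₀, hx₀⟩ := hne
  obtain ⟨x, hx, hfix, -⟩ := hcontr.exists_fixedPoint' hsc hmaps hx₀ (edist_ne_top x₀ (g x₀))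
  refine ⟨x, ⟨hx, hfix⟩, fun y ⟨hy, hyfix⟩ => ?_⟩
  exact congrArg Subtype.val (hcontr.fixedPoint_unique' (x := ⟨y, hy⟩) (y := ⟨x, hx⟩)
    (Subtype.ext hyfix) (Subtype.ext hfix))

theorem stmt_1_general
    {V W : Type*} [NormedAddCommGroup V] [NormedSpace ℝ V] [CompleteSpace V]
    [NormedAddCommGroup W] [NormedSpace ℝ W]
    (U : Set V)
    (u₀ : V) (ρ : ℝ) (hρ : 0 < ρ)
    (hball : closedBall u₀ ρ ⊆ U)
    (F : V → W) (DF : V → V →L[ℝ] W)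
    (hdiff : ∀ x ∈ U, HasFDerivAt F (DF x) x)
    (r α L : ℝ) (hα : 0 < α) (hL : 0 < L)
    (hres : ‖F u₀‖ ≤ r)
    (e : V ≃L[ℝ] W) (he : (e : V →L[ℝ] W) = DF u₀)
    (hinv : ‖(e.symm : W →L[ℝ] V)‖ ≤ 1 / α)
    (hlip : ∀ w ∈ closedBall u₀ ρ, ∀ z ∈ closedBall u₀ ρ,
      ‖DF w - DF z‖ ≤ L * ‖w - z‖)
    (hp : r / α + L / (2 * α) * ρ ^ 2 - ρ ≤ 0)
    (hq : L / α * ρ < 1) :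
    (∃! u, u ∈ closedBall u₀ ρ ∧ F u = 0) ∧
    (∀ w ∈ closedBall u₀ ρ, w - e.symm (F w) ∈ closedBall u₀ ρ) ∧
    (∀ w ∈ closedBall u₀ ρ, ∀ z ∈ closedBall u₀ ρ,
      ‖(w - e.symm (F w)) - (z - e.symm (F z))‖ ≤ (L / α * ρ) * ‖w - z‖) := by
  have hcenter : u₀ ∈ closedBall u₀ ρ := mem_closedBall_self hρ.le
  have hderiv : ∀ x ∈ closedBall u₀ ρ, HasFDerivAt F (DF x) x := fun x hx => hdiff x (hball hx)
  have hlip₀ : ∀ x ∈ closedBall u₀ ρ, ‖DF x - e‖ ≤ L * ‖x - u₀‖ := fun x hx =>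
    he ▸ hlip x hx u₀ hcenter
  have hbound : ∀ x ∈ closedBall u₀ ρ, ‖DF x - e‖ ≤ L * ρ := fun x hx =>
    (hlip₀ x hx).trans (mul_le_mul_of_nonneg_left (mem_closedBall_iff_norm.1 hx) hL.le)
  have hcontr : ∀ w ∈ closedBall u₀ ρ, ∀ z ∈ closedBall u₀ ρ,
      ‖newtonMap e F w - newtonMap e F z‖ ≤ L / α * ρ * ‖w - z‖ := by
    intro w hw z hz
    calc ‖newtonMap e F w - newtonMap e F z‖ ≤ ‖(e.symm : W →L[ℝ] V)‖ * (L * ρ) * ‖w - z‖ :=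
          norm_newtonMap_sub_newtonMap_le e (convex_closedBall u₀ ρ) hderiv hbound hw hz
      _ ≤ 1 / α * (L * ρ) * ‖w - z‖ := by gcongr
      _ = L / α * ρ * ‖w - z‖ := by ring
  have hmaps : MapsTo (newtonMap e F) (closedBall u₀ ρ) (closedBall u₀ ρ) := by
    intro w hw
    rw [mem_closedBall_iff_norm]
    calc ‖newtonMap e F w - u₀‖
        ≤ ‖(e.symm : W →L[ℝ] V)‖ * (L / 2 * ‖w - u₀‖ ^ 2 + ‖F u₀‖) :=
          norm_newtonMap_sub_le e (convex_closedBall u₀ ρ) hderiv hlip₀ hcenter hw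
      _ ≤ 1 / α * (L / 2 * ρ ^ 2 + r) := by
          gcongr
          exact mem_closedBall_iff_norm.1 hw
      _ = r / α + L / (2 * α) * ρ ^ 2 := by field_simp; ring
      _ ≤ ρ := by linarith
  have hK : LipschitzOnWith ⟨L / α * ρ, by positivity⟩ (newtonMap e F) (closedBall u₀ ρ) :=
    LipschitzOnWith.of_dist_le_mul fun w hw z hz => by
      rw [dist_eq_norm, dist_eq_norm]
      exact hcontr w hw z hz
  have hfixed := exists_unique_isFixedPt_of_lipschitzOnWith isClosed_closedBall.isComplete
    ⟨u₀, hcenter⟩ hmaps hK hq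
  simp only [Function.IsFixedPt, newtonMap_eq_self_iff] at hfixed
  exact ⟨hfixed, hmaps, hcontr⟩

/-- Verified existence and localisation via Newton–Kantorovich (Theorem 3.2). -/
theorem stmt_1
    {V W : Type*} [NormedAddCommGroup V] [NormedSpace ℝ V] [CompleteSpace V]
    [NormedAddCommGroup W] [NormedSpace ℝ W] [CompleteSpace W]
    (U : Set V) (hU : IsOpen U)
    (u₀ : V) (hu₀ : u₀ ∈ U) (ρ : ℝ) (hρ : 0 < ρ)
    (hball : closedBall u₀ ρ ⊆ U)
    (F : V → W) (DF : V → V →L[ℝ] W)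
    (hdiff : ∀ x ∈ U, HasFDerivAt F (DF x) x)
    (r α L : ℝ) (hr : 0 ≤ r) (hα : 0 < α) (hL : 0 < L)
    (hres : ‖F u₀‖ ≤ r)
    (e : V ≃L[ℝ] W) (he : (e : V →L[ℝ] W) = DF u₀)
    (hinv : ‖(e.symm : W →L[ℝ] V)‖ ≤ 1 / α)
    (hlip : ∀ w ∈ closedBall u₀ ρ, ∀ z ∈ closedBall u₀ ρ,
      ‖DF w - DF z‖ ≤ L * ‖w - z‖)
    (hp : r / α + L / (2 * α) * ρ ^ 2 - ρ ≤ 0)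
    (hq : L / α * ρ < 1) :
    (∃! u, u ∈ closedBall u₀ ρ ∧ F u = 0) ∧
    (∀ w ∈ closedBall u₀ ρ, w - e.symm (F w) ∈ closedBall u₀ ρ) ∧
    (∀ w ∈ closedBall u₀ ρ, ∀ z ∈ closedBall u₀ ρ,
      ‖(w - e.symm (F w)) - (z - e.symm (F z))‖ ≤ (L / α * ρ) * ‖w - z‖) :=
  stmt_1_general U u₀ ρ hρ hball F DF hdiff r α L hα hL hres e he hinv hlip hp hq
end

section
/- Let V and W be real Banach spaces, let U ⊆ V be open, let ũ ∈ U and ρ > 0 be such that the closed ball B_ρ := {w ∈ V : ‖w − ũ‖ ≤ ρ} is contained in U. Let F : V → W be Fréchet differentiable on U with ‖F(ũ)‖ ≤ r, let DF(ũ) be a continuous linear isomorphism from V onto W with ‖DF(ũ)⁻¹‖ ≤ 1/α for some α > 0, and suppose ‖DF(w) − DF(z)‖ ≤ L‖w − z‖ for all w, z ∈ B_ρ with some L ≥ 0. Then for every w ∈ B_ρ, the Newton map N(w) := w − DF(ũ)⁻¹(F(w)) satisfies ‖N(w) − ũ‖ ≤ r/α + (L/(2α))ρ². -/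
/-!
Writing `v = w - ũ`, the Newton map satisfies `N w - ũ = -DF(ũ)⁻¹ (F ũ + R)` with the Taylor
remainder `R = F w - F ũ - DF(ũ) v`. Along the segment `t ↦ ũ + t v` the remainder has derivative
`(DF(ũ + t v) - DF ũ) v`, of norm at most `L t ‖v‖²`, so comparison with `t ↦ L t² ‖v‖² / 2`
gives `‖R‖ ≤ L ‖v‖² / 2 ≤ L ρ² / 2`.
-/

open Metric Set

theorem norm_sub_sub_fderiv_le_of_norm_fderiv_sub_le {E G : Type*}
    [NormedAddCommGroup E] [NormedSpace ℝ E] [NormedAddCommGroup G] [NormedSpace ℝ G]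
    {f : E → G} {f' : E → E →L[ℝ] G} {s : Set E} {x y : E} {L : ℝ}
    (hs : Convex ℝ s) (hx : x ∈ s) (hy : y ∈ s)
    (hf : ∀ z ∈ s, HasFDerivAt f (f' z) z)
    (hlip : ∀ z ∈ s, ‖f' z - f' x‖ ≤ L * ‖z - x‖) :
    ‖f y - f x - f' x (y - x)‖ ≤ L / 2 * ‖y - x‖ ^ 2 := by
  set v := y - x
  have hseg : ∀ t ∈ Icc (0 : ℝ) 1, x + t • v ∈ s := fun t ht => by
    simpa [v, add_sub_cancel] using hs.add_smul_sub_mem hx hy ht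
  set g : ℝ → G := fun t => f (x + t • v) - f x - t • f' x v
  have hg : ∀ t ∈ Icc (0 : ℝ) 1, HasDerivAt g ((f' (x + t • v) - f' x) v) t := fun t ht => by
    have hpath : HasDerivAt (fun t : ℝ => x + t • v) v t :=
      ((hasDerivAt_id t).smul_const v).const_add x |>.congr_deriv (one_smul ℝ v)
    exact ((((hf _ (hseg t ht)).comp_hasDerivAt t hpath).sub_const (f x)).sub
      ((hasDerivAt_id t).smul_const (f' x v))).congr_deriv (by simp)
  have hbound : ∀ t ∈ Ico (0 : ℝ) 1, ‖(f' (x + t • v) - f' x) v‖ ≤ L * ‖v‖ ^ 2 * t := by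
    intro t ht
    have hlip_t := hlip _ (hseg t (Ico_subset_Icc_self ht))
    rw [add_sub_cancel_left, norm_smul, Real.norm_of_nonneg ht.1] at hlip_t
    calc ‖(f' (x + t • v) - f' x) v‖ ≤ ‖f' (x + t • v) - f' x‖ * ‖v‖ :=
          ContinuousLinearMap.le_opNorm _ _
      _ ≤ L * (t * ‖v‖) * ‖v‖ := by gcongr
      _ = L * ‖v‖ ^ 2 * t := by ring
  have hB : ∀ t : ℝ, HasDerivAt (fun t => L / 2 * ‖v‖ ^ 2 * t ^ 2) (L * ‖v‖ ^ 2 * t) t := fun t => by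
    simpa using ((hasDerivAt_pow 2 t).const_mul (L / 2 * ‖v‖ ^ 2)).congr_deriv (by ring)
  have hcompare := image_norm_le_of_norm_deriv_right_le_deriv_boundary
    (fun t ht => (hg t ht).continuousAt.continuousWithinAt)
    (fun t ht => (hg t (Ico_subset_Icc_self ht)).hasDerivWithinAt) (by simp [g]) hB hbound
    (right_mem_Icc.2 zero_le_one)
  simpa [g, v] using hcompare

theorem stmt_2_general
    {V W : Type*} [NormedAddCommGroup V] [NormedSpace ℝ V]
    [NormedAddCommGroup W] [NormedSpace ℝ W]
    (U : Set V)
    (u₀ : V) (ρ : ℝ)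
    (hball : closedBall u₀ ρ ⊆ U)
    (F : V → W) (DF : V → V →L[ℝ] W)
    (hdiff : ∀ x ∈ U, HasFDerivAt F (DF x) x)
    (r α L : ℝ) (hα : 0 < α) (hL : 0 ≤ L)
    (hres : ‖F u₀‖ ≤ r)
    (e : V ≃L[ℝ] W) (he : (e : V →L[ℝ] W) = DF u₀)
    (hinv : ‖(e.symm : W →L[ℝ] V)‖ ≤ 1 / α)
    (hlip : ∀ w ∈ closedBall u₀ ρ, ∀ z ∈ closedBall u₀ ρ,
      ‖DF w - DF z‖ ≤ L * ‖w - z‖) :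
    ∀ w ∈ closedBall u₀ ρ,
      ‖(w - e.symm (F w)) - u₀‖ ≤ r / α + L / (2 * α) * ρ ^ 2 := by
  intro w hw
  have hu₀ : u₀ ∈ closedBall u₀ ρ := mem_closedBall_self (dist_nonneg.trans hw)
  have htaylor : ‖F w - F u₀ - e (w - u₀)‖ ≤ L / 2 * ‖w - u₀‖ ^ 2 := by
    simpa only [← he, ContinuousLinearEquiv.coe_coe] using norm_sub_sub_fderiv_le_of_norm_fderiv_sub_le (convex_closedBall u₀ ρ)
      hu₀ hw (fun z hz => hdiff z (hball hz)) (fun z hz => hlip z hz u₀ hu₀)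
  have hresidual : ‖F u₀ + (F w - F u₀ - e (w - u₀))‖ ≤ r + L / 2 * ρ ^ 2 := by
    have : ‖w - u₀‖ ≤ ρ := mem_closedBall_iff_norm.1 hw
    grw [norm_add_le, hres, htaylor, this]
  have hnewton : w - e.symm (F w) - u₀ = -e.symm (F u₀ + (F w - F u₀ - e (w - u₀))) := by
    simp only [map_add, map_sub, ContinuousLinearEquiv.symm_apply_apply]
    abel
  calc ‖w - e.symm (F w) - u₀‖
      = ‖(e.symm : W →L[ℝ] V) (F u₀ + (F w - F u₀ - e (w - u₀)))‖ := by
        rw [hnewton, norm_neg]; rfl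
    _ ≤ 1 / α * (r + L / 2 * ρ ^ 2) := by
        grw [ContinuousLinearMap.le_opNorm, hinv, hresidual]
    _ = r / α + L / (2 * α) * ρ ^ 2 := by field_simp

/-- Self-mapping estimate for the Newton map (Step 1 in the proof of Theorem 3.2). -/
theorem stmt_2
    {V W : Type*} [NormedAddCommGroup V] [NormedSpace ℝ V] [CompleteSpace V]
    [NormedAddCommGroup W] [NormedSpace ℝ W] [CompleteSpace W]
    (U : Set V) (hU : IsOpen U)
    (u₀ : V) (hu₀ : u₀ ∈ U) (ρ : ℝ) (hρ : 0 < ρ)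
    (hball : closedBall u₀ ρ ⊆ U)
    (F : V → W) (DF : V → V →L[ℝ] W)
    (hdiff : ∀ x ∈ U, HasFDerivAt F (DF x) x)
    (r α L : ℝ) (hr : 0 ≤ r) (hα : 0 < α) (hL : 0 ≤ L)
    (hres : ‖F u₀‖ ≤ r)
    (e : V ≃L[ℝ] W) (he : (e : V →L[ℝ] W) = DF u₀)
    (hinv : ‖(e.symm : W →L[ℝ] V)‖ ≤ 1 / α)
    (hlip : ∀ w ∈ closedBall u₀ ρ, ∀ z ∈ closedBall u₀ ρ,
      ‖DF w - DF z‖ ≤ L * ‖w - z‖) :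
    ∀ w ∈ closedBall u₀ ρ,
      ‖(w - e.symm (F w)) - u₀‖ ≤ r / α + L / (2 * α) * ρ ^ 2 :=
  stmt_2_general U u₀ ρ hball F DF hdiff r α L hα hL hres e he hinv hlip
end

section
/- Let V be a real normed vector space with topological dual V*, let ũ ∈ V, ρ > 0, and let B_ρ := {w ∈ V : ‖w − ũ‖ ≤ ρ} be the closed ball of radius ρ centred at ũ, contained in an open set U ⊆ V. Let F : V → V* be Fréchet differentiable on U with ‖F(ũ)‖_{V*} ≤ r and ‖DF(w) − DF(z)‖ ≤ L‖w − z‖ for all w, z ∈ B_ρ (L ≥ 0). Let J : V → ℝ be Fréchet differentiable on U with ‖DJ(w) − DJ(z)‖_{V*} ≤ M‖w − z‖ for all w, z ∈ B_ρ (M ≥ 0). Define the bilinear form B(w,v) := (DF(ũ)w)(v) and assume B(v,v) ≥ α‖v‖² for all v ∈ V with some α > 0. Let u ∈ B_ρ satisfy F(u) = 0, assume there exists z ∈ V with B(v,z) = DJ(ũ)(v) for all v ∈ V, let z_h ∈ V be arbitrary, and define the adjoint residual G(v) := DJ(ũ)(v) − B(v, z_h) with dual norm ‖G‖. Then |J(u)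 − J(ũ)| ≤ E, where E := |F(ũ)(z_h)| + (1/2)Lρ²‖z_h‖ + (r + (1/2)Lρ²)·α⁻¹‖G‖ + (1/2)Mρ². -/
open Metric Set

/-! The error `e = u - u₀` solves the linearised equation `DF(u₀) e = -F(u₀) - R_F`, where the
Taylor remainder `R_F` is `O(Lρ²)` because `DF` is Lipschitz; coercivity then bounds `‖e‖` by
`α⁻¹ (r + Lρ²/2)`. Testing the linearised equation with `z_h` gives the exact representation
`J(u) - J(u₀) = R_J + G(e) - F(u₀)(z_h) - R_F(z_h)`, and each of the four terms is estimated
separately. -/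

lemma norm_sub_le_half_of_norm_deriv_le_mul {E : Type*} [NormedAddCommGroup E] [NormedSpace ℝ E]
    {φ φ' : ℝ → E} {K : ℝ}
    (hφ : ∀ t ∈ Icc (0 : ℝ) 1, HasDerivWithinAt φ (φ' t) (Icc 0 1) t)
    (hφ' : ∀ t ∈ Ico (0 : ℝ) 1, ‖φ' t‖ ≤ K * t) :
    ‖φ 1 - φ 0‖ ≤ K / 2 := by
  have hB (t : ℝ) : HasDerivAt (fun s => K * s ^ 2 / 2) (K * t) t :=
    (((hasDerivAt_pow 2 t).const_mul K).div_const 2).congr_deriv (by norm_num; ring)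
  have := image_norm_le_of_norm_deriv_right_le_deriv_boundary (a := 0) (b := 1)
    (f := fun t => φ t - φ 0)
    (fun t ht => ((hφ t ht).sub_const (φ 0)).continuousWithinAt)
    (fun t ht => ((hφ t (Ico_subset_Icc_self ht)).sub_const (φ 0)).mono_of_mem_nhdsWithin
      (Icc_mem_nhdsGE_of_mem ht))
    (by simp) hB hφ' (right_mem_Icc.2 zero_le_one)
  simpa using this

lemma Convex.norm_image_sub_sub_fderiv_le {E F : Type*} [NormedAddCommGroup E]
    [NormedSpace ℝ E] [NormedAddCommGroup F] [NormedSpace ℝ F]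
    {s : Set E} (hs : Convex ℝ s) {f : E → F} {f' : E → E →L[ℝ] F} {L : ℝ} {x y : E}
    (hf : ∀ w ∈ s, HasFDerivWithinAt f (f' w) s w)
    (hlip : ∀ w ∈ s, ‖f' w - f' x‖ ≤ L * ‖w - x‖) (hx : x ∈ s) (hy : y ∈ s) :
    ‖f y - f x - f' x (y - x)‖ ≤ 1 / 2 * L * ‖y - x‖ ^ 2 := by
  set e := y - x
  have hseg : MapsTo (fun t : ℝ => x + t • e) (Icc 0 1) s :=
    fun t ht => hs.add_smul_sub_mem hx hy ht
  have hpath (t : ℝ) : HasDerivWithinAt (fun t : ℝ => x + t • e) e (Icc 0 1) t := by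
    simpa using (((hasDerivAt_id t).smul_const e).const_add x).hasDerivWithinAt
  have hφ : ∀ t ∈ Icc (0 : ℝ) 1, HasDerivWithinAt (fun t : ℝ => f (x + t • e) - t • f' x e)
      (f' (x + t • e) e - f' x e) (Icc 0 1) t := by
    intro t ht
    refine ((hf _ (hseg ht)).comp_hasDerivWithinAt t (hpath t) hseg).sub ?_
    simpa using ((hasDerivAt_id t).smul_const (f' x e)).hasDerivWithinAt
  have hφ' : ∀ t ∈ Ico (0 : ℝ) 1, ‖f' (x + t • e) e - f' x e‖ ≤ L * ‖e‖ ^ 2 * t := by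
    intro t ht
    calc ‖f' (x + t • e) e - f' x e‖ = ‖(f' (x + t • e) - f' x) e‖ := rfl
      _ ≤ ‖f' (x + t • e) - f' x‖ * ‖e‖ := ContinuousLinearMap.le_opNorm _ _
      _ ≤ L * ‖x + t • e - x‖ * ‖e‖ := by
        gcongr
        exact hlip _ (hseg (Ico_subset_Icc_self ht))
      _ = L * ‖e‖ ^ 2 * t := by
        rw [add_sub_cancel_left, norm_smul, Real.norm_of_nonneg ht.1]
        ring
  have := norm_sub_le_half_of_norm_deriv_le_mul hφ hφ'
  simp only [one_smul, zero_smul, add_zero, sub_zero, e, add_sub_cancel] at this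
  rw [sub_right_comm]
  linarith

lemma norm_image_sub_sub_fderiv_le_of_mem_closedBall {E F : Type*} [NormedAddCommGroup E]
    [NormedSpace ℝ E] [NormedAddCommGroup F] [NormedSpace ℝ F]
    {f : E → F} {f' : E → E →L[ℝ] F} {x y : E} {ρ L : ℝ} (hL : 0 ≤ L)
    (hf : ∀ w ∈ closedBall x ρ, HasFDerivWithinAt f (f' w) (closedBall x ρ) w)
    (hlip : ∀ w ∈ closedBall x ρ, ∀ w' ∈ closedBall x ρ, ‖f' w - f' w'‖ ≤ L * ‖w - w'‖)
    (hy : y ∈ closedBall x ρ) :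
    ‖f y - f x - f' x (y - x)‖ ≤ 1 / 2 * L * ρ ^ 2 := by
  have hx : x ∈ closedBall x ρ := mem_closedBall_self (dist_nonneg.trans hy)
  have hyx : ‖y - x‖ ≤ ρ := by rwa [← dist_eq_norm, ← mem_closedBall]
  calc ‖f y - f x - f' x (y - x)‖ ≤ 1 / 2 * L * ‖y - x‖ ^ 2 :=
        (convex_closedBall x ρ).norm_image_sub_sub_fderiv_le hf (hlip · · x hx) hx hy
    _ ≤ 1 / 2 * L * ρ ^ 2 := by gcongr

lemma norm_le_inv_mul_norm_apply_of_coercive {E : Type*} [NormedAddCommGroup E]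
    [NormedSpace ℝ E] {B : E →L[ℝ] E →L[ℝ] ℝ} {α : ℝ} (hα : 0 < α)
    (hB : ∀ v, α * ‖v‖ ^ 2 ≤ B v v) (e : E) :
    ‖e‖ ≤ α⁻¹ * ‖B e‖ := by
  rw [inv_mul_eq_div, le_div_iff₀ hα]
  rcases (norm_nonneg e).eq_or_lt with he | he
  · rw [← he, zero_mul]
    positivity
  · have : α * ‖e‖ * ‖e‖ ≤ ‖B e‖ * ‖e‖ := calc
      α * ‖e‖ * ‖e‖ = α * ‖e‖ ^ 2 := by ring
      _ ≤ B e e := hB e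
      _ ≤ ‖B e e‖ := Real.le_norm_self _
      _ ≤ ‖B e‖ * ‖e‖ := (B e).le_opNorm e
    linarith [le_of_mul_le_mul_right this he]

theorem stmt_12_general
    {V : Type*} [NormedAddCommGroup V] [NormedSpace ℝ V]
    (u₀ : V) (ρ : ℝ)
    (U : Set V) (hball : closedBall u₀ ρ ⊆ U)
    (F : V → V →L[ℝ] ℝ) (DF : V → V →L[ℝ] V →L[ℝ] ℝ)
    (hFdiff : ∀ x ∈ U, HasFDerivAt F (DF x) x)
    (r : ℝ) (hres : ‖F u₀‖ ≤ r)
    (L : ℝ) (hL : 0 ≤ L)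
    (hFlip : ∀ w ∈ closedBall u₀ ρ, ∀ z ∈ closedBall u₀ ρ,
      ‖DF w - DF z‖ ≤ L * ‖w - z‖)
    (J : V → ℝ) (DJ : V → V →L[ℝ] ℝ)
    (hJdiff : ∀ x ∈ U, HasFDerivAt J (DJ x) x)
    (M : ℝ) (hM : 0 ≤ M)
    (hJlip : ∀ w ∈ closedBall u₀ ρ, ∀ z ∈ closedBall u₀ ρ,
      ‖DJ w - DJ z‖ ≤ M * ‖w - z‖)
    (α : ℝ) (hα : 0 < α)
    (hcoer : ∀ v : V, α * ‖v‖ ^ 2 ≤ DF u₀ v v)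
    (u : V) (hu : u ∈ closedBall u₀ ρ) (hFu : F u = 0)
    (z : V)
    (z_h : V) :
    |J u - J u₀| ≤
      |F u₀ z_h| + 1 / 2 * L * ρ ^ 2 * ‖z_h‖ +
        (r + 1 / 2 * L * ρ ^ 2) * α⁻¹ * ‖DJ u₀ - (DF u₀).flip z_h‖ +
        1 / 2 * M * ρ ^ 2 := by
  set e := u - u₀
  set RF := F u - F u₀ - DF u₀ e
  set RJ := J u - J u₀ - DJ u₀ e
  set G := DJ u₀ - (DF u₀).flip z_h
  have hRF : ‖RF‖ ≤ 1 / 2 * L * ρ ^ 2 := norm_image_sub_sub_fderiv_le_of_mem_closedBall hL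
    (fun w hw => (hFdiff w (hball hw)).hasFDerivWithinAt) hFlip hu
  have hRJ : ‖RJ‖ ≤ 1 / 2 * M * ρ ^ 2 := norm_image_sub_sub_fderiv_le_of_mem_closedBall hM
    (fun w hw => (hJdiff w (hball hw)).hasFDerivWithinAt) hJlip hu
  have hlin : DF u₀ e = -F u₀ - RF := by simp only [RF, hFu]; abel
  have he : ‖e‖ ≤ α⁻¹ * (r + 1 / 2 * L * ρ ^ 2) := by
    refine (norm_le_inv_mul_norm_apply_of_coercive hα hcoer e).trans ?_
    rw [hlin]
    gcongr
    exact (norm_sub_le _ _).trans (by rw [norm_neg]; linarith)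
  have hrepr : J u - J u₀ = RJ + G e - F u₀ z_h - RF z_h := by
    have : DF u₀ e z_h = -F u₀ z_h - RF z_h := by simp [hlin]
    simp only [RJ, G, sub_apply, ContinuousLinearMap.flip_apply, this]
    ring
  have hGe : |G e| ≤ ‖G‖ * (α⁻¹ * (r + 1 / 2 * L * ρ ^ 2)) :=
    (G.le_opNorm e).trans (by gcongr)
  have hRFz : |RF z_h| ≤ 1 / 2 * L * ρ ^ 2 * ‖z_h‖ :=
    (RF.le_opNorm z_h).trans (by gcongr)
  rw [Real.norm_eq_abs] at hRJ
  calc |J u - J u₀| = |RJ + G e - F u₀ z_h - RF z_h| := by rw [hrepr]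
    _ ≤ |RJ| + |G e| + |F u₀ z_h| + |RF z_h| := by
      grw [abs_sub, abs_sub, abs_add_le]
    _ ≤ _ := by linarith

/-- Certified adjoint-enhanced enclosure for a quantity of interest (Theorem 8.3). -/
theorem stmt_12
    {V : Type*} [NormedAddCommGroup V] [NormedSpace ℝ V]
    (u₀ : V) (ρ : ℝ) (hρ : 0 < ρ)
    (U : Set V) (hU : IsOpen U) (hball : closedBall u₀ ρ ⊆ U)
    (F : V → V →L[ℝ] ℝ) (DF : V → V →L[ℝ] V →L[ℝ] ℝ)
    (hFdiff : ∀ x ∈ U, HasFDerivAt F (DF x) x)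
    (r : ℝ) (hres : ‖F u₀‖ ≤ r)
    (L : ℝ) (hL : 0 ≤ L)
    (hFlip : ∀ w ∈ closedBall u₀ ρ, ∀ z ∈ closedBall u₀ ρ,
      ‖DF w - DF z‖ ≤ L * ‖w - z‖)
    (J : V → ℝ) (DJ : V → V →L[ℝ] ℝ)
    (hJdiff : ∀ x ∈ U, HasFDerivAt J (DJ x) x)
    (M : ℝ) (hM : 0 ≤ M)
    (hJlip : ∀ w ∈ closedBall u₀ ρ, ∀ z ∈ closedBall u₀ ρ,
      ‖DJ w - DJ z‖ ≤ M * ‖w - z‖)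
    (α : ℝ) (hα : 0 < α)
    (hcoer : ∀ v : V, α * ‖v‖ ^ 2 ≤ DF u₀ v v)
    (u : V) (hu : u ∈ closedBall u₀ ρ) (hFu : F u = 0)
    (z : V) (hz : ∀ v : V, DF u₀ v z = DJ u₀ v)
    (z_h : V) :
    |J u - J u₀| ≤
      |F u₀ z_h| + 1 / 2 * L * ρ ^ 2 * ‖z_h‖ +
        (r + 1 / 2 * L * ρ ^ 2) * α⁻¹ * ‖DJ u₀ - (DF u₀).flip z_h‖ +
        1 / 2 * M * ρ ^ 2 :=
  stmt_12_general u₀ ρ U hball F DF hFdiff r hres L hL hFlip J DJ hJdiff M hM hJlip α hα hcoer u hu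
    hFu z z_h
end
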